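/- arXiv:2204.09889 — 2 statements merged into one kernel-verified Lean document; each statement's English description precedes it below -/
import Mathlib

section
/- Let p, r, s ≥ 1 and let M be a real symmetric positive semidefinite matrix of size (p+r+s)×(p+r+s), partitioned as M = [[A, B, C], [Bᵀ, D, E], [Cᵀ, Eᵀ, F]] with A of size p×p, D of size r×r, and F of size s×s. Assume that D is positive definite and that the (r+s)×(r+s) block G = [[D, E], [Eᵀ, F]] is positive definite. Then the matrix (A − B D⁻¹ Bᵀ) − (A − [B C] G⁻¹ [B C]ᵀ) is positive semidefinite; that is, the conditional covariance of the p test points given all r+s inducing points is dominated in the Loewner order by their conditional covariance given only the first r inducing points. -/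
open Matrix

/-!
Write `G = [[D, E], [Eᴴ, F]]`, `S = F - Eᴴ D⁻¹ E` for its Schur complement and
`P = [[D⁻¹, 0], [0, 0]]`. Conjugating by `[B C]` turns `P` into `B D⁻¹ Bᴴ` and `G⁻¹` into
`[B C] G⁻¹ [B C]ᴴ`, so the claim is that `P ≤ G⁻¹` in the Loewner order. This follows from the
identity `G - G P G = [[0, 0], [0, S]]`, which gives `G⁻¹ - P = G⁻¹ [[0, 0], [0, S]] G⁻¹`, together
with `S ≥ 0`.
-/

namespace Matrix

variable {l m n : Type*} [Fintype m] [Fintype n]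

theorem nonsing_inv_sub_eq_nonsing_inv_mul_sub_mul_mul [DecidableEq n] {R : Type*} [CommRing R]
    {G : Matrix n n R} (hG : IsUnit G.det) (P : Matrix n n R) :
    G⁻¹ - P = G⁻¹ * (G - G * P * G) * G⁻¹ := by
  simp only [Matrix.mul_sub, Matrix.sub_mul, ← Matrix.mul_assoc, nonsing_inv_mul G hG,
    Matrix.one_mul, Matrix.mul_assoc P, mul_nonsing_inv G hG, Matrix.mul_one]

theorem fromBlocks_sub_mul_fromBlocks_nonsing_inv_mul [DecidableEq m] {R : Type*} [CommRing R]
    {D : Matrix m m R} (hD : IsUnit D.det) (E : Matrix m n R) (C : Matrix n m R)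
    (F : Matrix n n R) :
    fromBlocks D E C F - fromBlocks D E C F * fromBlocks D⁻¹ 0 0 0 * fromBlocks D E C F =
      fromBlocks 0 0 0 (F - C * D⁻¹ * E) := by
  simp only [fromBlocks_multiply, Matrix.mul_zero, Matrix.zero_mul, add_zero,
    mul_nonsing_inv D hD, Matrix.one_mul, Matrix.mul_assoc, nonsing_inv_mul D hD, Matrix.mul_one]
  rw [sub_eq_add_neg, fromBlocks_neg, fromBlocks_add]
  simp [sub_eq_add_neg]

theorem fromCols_mul_fromBlocks_zero_mul_conjTranspose {R : Type*} [Semiring R] [StarRing R]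
    (B : Matrix l m R) (C : Matrix l n R) (X : Matrix m m R) :
    fromCols B C * fromBlocks X 0 0 (0 : Matrix n n R) * (fromCols B C)ᴴ = B * X * Bᴴ := by
  simp [fromCols_mul_fromBlocks, conjTranspose_fromCols_eq_fromRows_conjTranspose,
    fromCols_mul_fromRows]

variable {K : Type*} [Field K] [PartialOrder K] [StarRing K]

theorem PosSemidef.fromBlocks_zero_zero_zero [DecidableEq n] {S : Matrix n n K}
    (hS : S.PosSemidef) :
    (fromBlocks (0 : Matrix m m K) 0 0 S).PosSemidef := by
  have := hS.conjTranspose_mul_mul_same (fromCols (0 : Matrix n m K) (1 : Matrix n n K))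
  convert this using 1
  ext (i | i) (j | j) <;> simp [conjTranspose_fromCols_eq_fromRows_conjTranspose]

theorem PosDef.posSemidef_nonsing_inv_sub_fromBlocks [DecidableEq m] [DecidableEq n]
    [StarOrderedRing K] {D : Matrix m m K} {E : Matrix m n K} {F : Matrix n n K}
    (hG : (fromBlocks D E Eᴴ F).PosDef) :
    ((fromBlocks D E Eᴴ F)⁻¹ - fromBlocks D⁻¹ 0 0 0).PosSemidef := by
  have hD : D.PosDef := by
    convert hG.submatrix (Sum.inl_injective (β := n))
    ext; simp
  have : Invertible D := hD.isUnit.invertible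
  have hS : (F - Eᴴ * D⁻¹ * E).PosSemidef := (PosDef.fromBlocks₁₁ E F hD).mp hG.posSemidef
  have hGinv : (fromBlocks D E Eᴴ F)⁻¹ᴴ = (fromBlocks D E Eᴴ F)⁻¹ := hG.inv.isHermitian.eq
  rw [nonsing_inv_sub_eq_nonsing_inv_mul_sub_mul_mul ((isUnit_iff_isUnit_det _).mp hG.isUnit),
    fromBlocks_sub_mul_fromBlocks_nonsing_inv_mul (isUnit_det_of_invertible D)]
  simpa only [hGinv] using
    (hS.fromBlocks_zero_zero_zero (m := m)).mul_mul_conjTranspose_same (fromBlocks D E Eᴴ F)⁻¹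

end Matrix

theorem conditional_covariance_loewner_nonincreasing_general
    (p r s : ℕ)
    (A : Matrix (Fin p) (Fin p) ℝ) (B : Matrix (Fin p) (Fin r) ℝ)
    (C : Matrix (Fin p) (Fin s) ℝ) (D : Matrix (Fin r) (Fin r) ℝ)
    (E : Matrix (Fin r) (Fin s) ℝ) (F : Matrix (Fin s) (Fin s) ℝ)
    (hG : (Matrix.fromBlocks D E Eᵀ F).PosDef) :
    ((A - B * D⁻¹ * Bᵀ) -
      (A - Matrix.fromCols B C * (Matrix.fromBlocks D E Eᵀ F)⁻¹ *
        (Matrix.fromCols B C)ᵀ)).PosSemidef := by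
  simp only [← conjTranspose_eq_transpose_of_trivial] at hG ⊢
  rw [sub_sub_sub_cancel_left, ← fromCols_mul_fromBlocks_zero_mul_conjTranspose B C D⁻¹,
    ← Matrix.sub_mul, ← Matrix.mul_sub]
  exact hG.posSemidef_nonsing_inv_sub_fromBlocks.mul_mul_conjTranspose_same _

/-- The conditional covariance of the `p` test points given all `r + s` inducing points
is dominated in the Loewner order by their conditional covariance given only the first
`r` inducing points. -/
theorem conditional_covariance_loewner_nonincreasing
    (p r s : ℕ) (hp : 1 ≤ p) (hr : 1 ≤ r) (hs : 1 ≤ s)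
    (A : Matrix (Fin p) (Fin p) ℝ) (B : Matrix (Fin p) (Fin r) ℝ)
    (C : Matrix (Fin p) (Fin s) ℝ) (D : Matrix (Fin r) (Fin r) ℝ)
    (E : Matrix (Fin r) (Fin s) ℝ) (F : Matrix (Fin s) (Fin s) ℝ)
    (hM : (Matrix.fromBlocks A (Matrix.fromCols B C)
            (Matrix.fromCols B C)ᵀ (Matrix.fromBlocks D E Eᵀ F)).PosSemidef)
    (hD : D.PosDef)
    (hG : (Matrix.fromBlocks D E Eᵀ F).PosDef) :
    ((A - B * D⁻¹ * Bᵀ) -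
      (A - Matrix.fromCols B C * (Matrix.fromBlocks D E Eᵀ F)⁻¹ *
        (Matrix.fromCols B C)ᵀ)).PosSemidef :=
  conditional_covariance_loewner_nonincreasing_general p r s A B C D E F hG
end

section
/- Let φ(t) = (1/√(2π)) · exp(−t²/2) denote the standard normal density and Φ(x) = ∫_{−∞}^{x} φ(t) dt the standard normal cumulative distribution function. Then for every μ ∈ ℝ and every σ > 0, ∫ Φ(f) dν(f) = Φ( μ / √(1 + σ²) ), where ν is the Gaussian probability measure on ℝ with mean μ and variance σ². -/
open MeasureTheory

/-- The standard normal density `φ`. -/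
noncomputable def stdGaussianPDF (t : ℝ) : ℝ :=
  (1 / Real.sqrt (2 * Real.pi)) * Real.exp (-t ^ 2 / 2)

/-- The standard normal cumulative distribution function `Φ`. -/
noncomputable def stdGaussianCDF (x : ℝ) : ℝ :=
  ∫ t in Set.Iic x, stdGaussianPDF t

/-! Write `Φ(f) = P(Z ≤ f)` for a standard normal `Z`. Integrating against the law `ν` of an
independent `F` gives `P(Z - F ≤ 0)`, and `Z - F` is Gaussian with mean `-μ` and variance
`1 + σ²` because Gaussian laws convolve by adding means and variances; standardizing,
`P(Z - F ≤ 0) = Φ(μ / √(1 + σ²))`. -/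

open ProbabilityTheory Set

namespace MeasureTheory.Measure

variable {M : Type*} [AddMonoid M] [MeasurableSpace M] [MeasurableAdd₂ M]

theorem conv_apply (μ ν : Measure M) [SFinite μ] [SFinite ν] {s : Set M} (hs : MeasurableSet s) :
    (μ ∗ ν) s = ∫⁻ y, μ ((· + y) ⁻¹' s) ∂ν := by
  rw [conv, map_apply measurable_add hs, prod_apply_symm (measurable_add hs)]
  rfl

theorem measureReal_conv (μ ν : Measure M) [IsFiniteMeasure μ] [SFinite ν] {s : Set M}
    (hs : MeasurableSet s) :
    (μ ∗ ν).real s = ∫ y, μ.real ((· + y) ⁻¹' s) ∂ν := by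
  rw [measureReal_def, conv_apply μ ν hs, ← integral_toReal]
  · rfl
  · exact (measurable_measure_prodMk_right (measurable_add hs)).aemeasurable
  · exact ae_of_all _ fun _ ↦ measure_lt_top _ _

end MeasureTheory.Measure

theorem stdGaussianCDF_eq_measureReal_gaussianReal (x : ℝ) :
    stdGaussianCDF x = (gaussianReal 0 1).real (Iic x) := by
  have hpdf : gaussianPDFReal 0 1 = stdGaussianPDF := by
    funext t
    simp [gaussianPDFReal, stdGaussianPDF]
  rw [measureReal_def, gaussianReal_apply_eq_integral _ one_ne_zero, hpdf,
    ENNReal.toReal_ofReal (setIntegral_nonneg measurableSet_Iic fun t _ ↦ by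
      unfold stdGaussianPDF; positivity)]
  rfl

theorem gaussianReal_map_standardize (m : ℝ) {v : NNReal} (hv : v ≠ 0) :
    (gaussianReal m v).map (fun x ↦ (x - m) / √v) = gaussianReal 0 1 := by
  have hcomp : (fun x ↦ (x - m) / √v) = (· / √(v : ℝ)) ∘ (· - m) := rfl
  rw [hcomp, ← Measure.map_map (by fun_prop) (by fun_prop), gaussianReal_map_sub_const,
    gaussianReal_map_div_const, sub_self, zero_div]
  congr
  ext
  simp [hv]

theorem measureReal_gaussianReal_Iic (m : ℝ) {v : NNReal} (hv : v ≠ 0) (x : ℝ) :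
    (gaussianReal m v).real (Iic x) = stdGaussianCDF ((x - m) / √v) := by
  have hsqrt : 0 < √(v : ℝ) := Real.sqrt_pos.2 (NNReal.coe_pos.2 (pos_iff_ne_zero.2 hv))
  rw [stdGaussianCDF_eq_measureReal_gaussianReal, ← gaussianReal_map_standardize m hv,
    map_measureReal_apply (by fun_prop) measurableSet_Iic]
  congr
  ext y
  simp [div_le_div_iff_of_pos_right hsqrt]

theorem integral_probit_gaussian_general (μ σ : ℝ) :
    ∫ f, stdGaussianCDF f ∂(ProbabilityTheory.gaussianReal μ ⟨σ ^ 2, sq_nonneg σ⟩)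
      = stdGaussianCDF (μ / Real.sqrt (1 + σ ^ 2)) := by
  set ν : NNReal := ⟨σ ^ 2, sq_nonneg σ⟩
  have hΦ (g : ℝ) : stdGaussianCDF (-g) = (gaussianReal 0 1).real ((· + g) ⁻¹' Iic 0) := by
    rw [stdGaussianCDF_eq_measureReal_gaussianReal]
    congr
    ext z
    simp [le_neg_iff_add_nonpos_right]
  calc ∫ f, stdGaussianCDF f ∂gaussianReal μ ν
      = ∫ g, stdGaussianCDF (-g) ∂gaussianReal (-μ) ν := by
        rw [← gaussianReal_map_neg]
        exact (((MeasurableEquiv.neg ℝ).measurableEmbedding.integral_map _).trans (by simp)).symm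
    _ = (gaussianReal 0 1 ∗ gaussianReal (-μ) ν).real (Iic 0) := by
        simp only [hΦ, Measure.measureReal_conv _ _ measurableSet_Iic]
    _ = stdGaussianCDF (μ / √(1 + σ ^ 2)) := by
        rw [gaussianReal_conv_gaussianReal, measureReal_gaussianReal_Iic _ (by positivity),
          zero_add, zero_sub, neg_neg]
        rfl

/-- The predictive class probability of the Gaussian process classifier:
`∫ Φ(f) dν(f) = Φ(μ / √(1 + σ²))` when `ν` is Gaussian with mean `μ` and variance `σ²`. -/
theorem integral_probit_gaussian (μ σ : ℝ) (hσ : 0 < σ) :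
    ∫ f, stdGaussianCDF f ∂(ProbabilityTheory.gaussianReal μ ⟨σ ^ 2, sq_nonneg σ⟩)
      = stdGaussianCDF (μ / Real.sqrt (1 + σ ^ 2)) :=
  integral_probit_gaussian_general μ σ
end
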